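/- arXiv:0809.2414 — 2 statements merged into one kernel-verified Lean document; each statement's English description precedes it below -/
import Mathlib

section
/- If a capacitated tree (T,m) admits an inversion function I, then the Coxeter-like complex Delta_{(T,m)} is shellable; more precisely, listing the facets of Delta_{(T,m)} (identified with the labellings of (T,m)) in any linear extension of the weak order <=_weak associated to I yields a shelling of Delta_{(T,m)}. -/
set_option linter.unusedSectionVars false

open scoped Classical

noncomputable section

variable {V : Type} [Fintype V] [DecidableEq V]

/-- The connected components of `G` with the edges in `D` deleted; these are the
vertices of the contracted tree of `(G, D)`. -/
abbrev Comp (G : SimpleGraph V) (D : Finset (Sym2 V)) : Type _ :=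
  (G.deleteEdges (D : Set (Sym2 V))).ConnectedComponent

/-- The component of a vertex. -/
def compMk (G : SimpleGraph V) (D : Finset (Sym2 V)) (v : V) : Comp G D :=
  (G.deleteEdges (D : Set (Sym2 V))).connectedComponentMk v

/-- Coarsening map on components induced by shrinking the deleted edge set. -/
def compMap (G : SimpleGraph V) {D' D : Finset (Sym2 V)} (h : D' ⊆ D) :
    Comp G D → Comp G D' :=
  SimpleGraph.ConnectedComponent.map
    (SimpleGraph.Hom.ofLE (SimpleGraph.deleteEdges_anti (Finset.coe_subset.mpr h)))

/-- The capacity of a component: the sum of the capacities of its vertices. -/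
def cap (G : SimpleGraph V) (m : V → ℕ) (D : Finset (Sym2 V)) (c : Comp G D) : ℕ :=
  ∑ v ∈ Finset.univ.filter (fun v => compMk G D v = c), m v

/-- A labelling of the contracted tree of `(G, D)`: each label in `Fin N` is assigned
to a component, and each component receives exactly its capacity many labels. -/
structure Labelling (G : SimpleGraph V) (m : V → ℕ) (N : ℕ) (D : Finset (Sym2 V)) where
  g : Fin N → Comp G D
  balanced : ∀ c : Comp G D,
    (Finset.univ.filter (fun i => g i = c)).card = cap G m D c

/-- A face of the Coxeter-like complex `Δ_{(T,m)}`. -/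
structure Face (G : SimpleGraph V) (m : V → ℕ) (N : ℕ) where
  D : Finset (Sym2 V)
  hD : (D : Set (Sym2 V)) ⊆ G.edgeSet
  lab : Labelling G m N D

/-- `F'` is a subface of `F`. -/
def Subface {G : SimpleGraph V} {m : V → ℕ} {N : ℕ} (F' F : Face G m N) : Prop :=
  ∃ h : F'.D ⊆ F.D, ∀ i : Fin N, F'.lab.g i = compMap G h (F.lab.g i)

/-- `rank` injectively (hence linearly) orders the maximal faces `toFace k`, and this
order is a shelling: any face shared between `toFace k` and an earlier maximal face is
contained in a codimension-one face (one with `d` deleted edges) with the same property. -/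
def IsShellingVia (G : SimpleGraph V) (m : V → ℕ) (N : ℕ) (d : ℕ)
    {ι : Type} (toFace : ι → Face G m N) (rank : ι → ℕ) : Prop :=
  Function.Injective rank ∧
  ∀ (k : ι) (S : Face G m N), Subface S (toFace k) →
    (∃ j, rank j < rank k ∧ Subface S (toFace j)) →
    ∃ S' : Face G m N, S'.D.card = d ∧ Subface S S' ∧ Subface S' (toFace k) ∧
      ∃ j, rank j < rank k ∧ Subface S' (toFace j)

/-- The subcomplex of `Δ_{(T,m)}` whose maximal faces are those satisfying `P`
(all of them having `d + 1` deleted edges) is shellable. -/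
def ShellableOn (G : SimpleGraph V) (m : V → ℕ) (N : ℕ)
    (P : Face G m N → Prop) (d : ℕ) : Prop :=
  ∃ rank : {F : Face G m N // P F} → ℕ,
    IsShellingVia G m N d (fun F => F.1) rank

/-- Two components are adjacent in the contracted tree when some deleted edge joins them. -/
def CompAdj (G : SimpleGraph V) (D : Finset (Sym2 V)) (c c' : Comp G D) : Prop :=
  c ≠ c' ∧ ∃ a b : V, s(a, b) ∈ D ∧ compMk G D a = c ∧ compMk G D b = c'

/-- `τ'` redistributes, between the components `i` and `j`, the labels jointly
assigned by `τ` to `i` and `j`, leaving all other labels unchanged. -/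
def Redistrib {G : SimpleGraph V} {m : V → ℕ} {N : ℕ} {D : Finset (Sym2 V)}
    (τ τ' : Labelling G m N D) (i j : Comp G D) : Prop :=
  (∀ ℓ : Fin N, τ.g ℓ ≠ i → τ.g ℓ ≠ j → τ'.g ℓ = τ.g ℓ) ∧
  (∀ ℓ : Fin N, (τ.g ℓ = i ∨ τ.g ℓ = j) → (τ'.g ℓ = i ∨ τ'.g ℓ = j))

/-- The type of candidate inversion functions: to each face (a deleted edge set `D`
together with a labelling of the contracted tree) assign a set of pairs of components. -/
abbrev InvData (G : SimpleGraph V) (m : V → ℕ) (N : ℕ) : Type :=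
  (D : Finset (Sym2 V)) → Labelling G m N D → Set (Comp G D × Comp G D)

/-- A local sorting step along an edge of `A`: `Step I D A τ' τ` means `τ' = (i,j)τ`
for some inversion pair `(i,j)` of `τ` joined by an edge of `A`. -/
def Step {G : SimpleGraph V} {m : V → ℕ} {N : ℕ} (I : InvData G m N)
    (D A : Finset (Sym2 V)) (τ' τ : Labelling G m N D) : Prop :=
  ∃ i j : Comp G D, (i, j) ∈ I D τ ∧
    (∃ a b : V, s(a, b) ∈ A ∧ compMk G D a = i ∧ compMk G D b = j) ∧
    Redistrib τ τ' i j ∧ (i, j) ∉ I D τ'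

/-- The full deleted edge set, corresponding to facets. -/
def fullD (G : SimpleGraph V) : Finset (Sym2 V) := G.edgeFinset

/-- The facet determined by a labelling of `(T, m)`. -/
def fullFace (G : SimpleGraph V) (m : V → ℕ) (N : ℕ)
    (w : Labelling G m N (fullD G)) : Face G m N :=
  ⟨fullD G, by simp [fullD], w⟩

theorem Face.subset_fullD {G : SimpleGraph V} {m : V → ℕ} {N : ℕ} (F : Face G m N) :
    F.D ⊆ fullD G := fun e he => by
  simpa [fullD, SimpleGraph.mem_edgeFinset] using F.hD he

/-- The facet `w` is inversion-free on its restriction to each component of `F`: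
no inversion pair of `w` has both entries inside a single component of `F`. -/
def InvFreeOnComponents {G : SimpleGraph V} {m : V → ℕ} {N : ℕ} (I : InvData G m N)
    (F : Face G m N) (w : Labelling G m N (fullD G)) : Prop :=
  ∀ p ∈ I (fullD G) w,
    compMap G F.subset_fullD p.1 ≠ compMap G F.subset_fullD p.2

/-- `I` is an inversion function for `(T, m)`. -/
structure IsInversionFunction (G : SimpleGraph V) (m : V → ℕ) (N : ℕ)
    (I : InvData G m N) : Prop where
  /-- `I` assigns pairs of adjacent vertices of the contracted tree. -/
  adj : ∀ D : Finset (Sym2 V), (D : Set (Sym2 V)) ⊆ G.edgeSet →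
    ∀ τ : Labelling G m N D, ∀ p ∈ I D τ, CompAdj G D p.1 p.2
  /-- (i) unique inversion-eliminating redistribution for each adjacent pair. -/
  unique_redistrib : ∀ D : Finset (Sym2 V), (D : Set (Sym2 V)) ⊆ G.edgeSet →
    ∀ (τ : Labelling G m N D) (i j : Comp G D), CompAdj G D i j →
      ∃! τ' : Labelling G m N D, Redistrib τ τ' i j ∧ (i, j) ∉ I D τ'
  /-- (ii) each face lies in a unique facet inversion-free on its components. -/
  unique_facet : ∀ F : Face G m N,
    ∃! w : Labelling G m N (fullD G),
      Subface F (fullFace G m N w) ∧ InvFreeOnComponents I F w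
  /-- (iii), (iv) the transitive closure of the local sorting steps, restricted to any
  subforest (steps along the allowed edges `A`), is a (strict) partial order. -/
  weak_order : ∀ D : Finset (Sym2 V), (D : Set (Sym2 V)) ⊆ G.edgeSet →
    ∀ A ⊆ D, ∀ τ : Labelling G m N D, ¬ Relation.TransGen (Step I D A) τ τ

/-- The degree of a vertex. -/
def deg (G : SimpleGraph V) (v : V) : ℕ := (G.neighborSet v).ncard

/-- The degree of a component of the contracted tree of `(G, E)`:
the number of edges of `E` incident to it. -/
def compDeg (G : SimpleGraph V) (E : Finset (Sym2 V)) (c : Comp G E) : ℕ :=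
  (E.filter (fun e => ∃ v ∈ e, compMk G E v = c)).card

/-- The contracted tree of `(G, E)`, with capacities `m`, has distributable capacity. -/
def ContractedDistributable (G : SimpleGraph V) (m : V → ℕ) (E : Finset (Sym2 V)) : Prop :=
  ∀ c : Comp G E, compDeg G E c - 1 ≤ cap G m E c

/-- The degree, inside the component `U` of `G - E'` containing it, of a component `c`
of the contracted tree of `(U, E|_U)`: the number of edges of `E` with both endpoints
in `U` which are incident to `c`. -/
def compDegWithin (G : SimpleGraph V) (E' E : Finset (Sym2 V)) (c : Comp G (E' ∪ E)) : ℕ :=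
  (E.filter (fun e => (∃ v ∈ e, compMk G (E' ∪ E) v = c) ∧
     (∀ v ∈ e, compMk G E' v = compMap G Finset.subset_union_left c))).card

/-- For every edge set `E'` disjoint from `E` and every connected component `U` of
`G - E'`, the contracted tree of `(U, E|_U)` (with capacities `m`) has distributable
capacity. -/
def RestrictedDistributable (G : SimpleGraph V) (m : V → ℕ) (E : Finset (Sym2 V)) : Prop :=
  ∀ E' : Finset (Sym2 V), (E' : Set (Sym2 V)) ⊆ G.edgeSet → Disjoint E' E →
    ∀ c : Comp G (E' ∪ E), compDegWithin G E' E c - 1 ≤ cap G m (E' ∪ E) c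

/-!
Order the facets by a linear extension of the weak order. Among the facets containing a face
`S`, the one inversion-free on the components of `S` comes first. So if `τ` and an earlier
facet share `S`, then `τ` has an inversion pair `(i,j)` inside a component of `S`; since `T` is
a tree the edge joining `i` and `j` is not deleted in `S`, and contracting it in `τ` gives a
codimension-one face containing `S` that also lies in the earlier facet `(i,j)τ`.
-/

theorem exists_injective_nat_of_transGen_irrefl {α : Type} [Finite α] (s : α → α → Prop)
    (hs : ∀ a, ¬ Relation.TransGen s a a) :
    ∃ r : α → ℕ, Function.Injective r ∧ ∀ a b, s a b → r a < r b := by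
  let : PartialOrder α :=
    { le := Relation.ReflTransGen s
      le_refl := fun _ => .refl
      le_trans := fun _ _ _ => .trans
      le_antisymm := fun a b hab hba => by
        by_contra hne
        exact hs a (((Relation.reflTransGen_iff_eq_or_transGen.mp hab).resolve_left
          (Ne.symm hne)).trans_left hba) }
  have : Finite (LinearExtension α) := inferInstanceAs (Finite α)
  obtain ⟨f⟩ := nonempty_orderEmbedding_of_finite_infinite (LinearExtension α) ℕ
  refine ⟨fun a => f (toLinearExtension a), f.injective, fun a b hab => f.strictMono ?_⟩
  have hlt : a < b := lt_of_le_of_ne (Relation.ReflTransGen.single hab)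
    fun h => hs a (by subst h; exact .single hab)
  exact lt_of_le_of_ne (toLinearExtension.monotone hlt.le) hlt.ne

section Shelling

variable {G : SimpleGraph V} {m : V → ℕ} {N : ℕ}

theorem Labelling.ext {D : Finset (Sym2 V)} {τ τ' : Labelling G m N D} (h : τ.g = τ'.g) :
    τ = τ' := by
  cases τ; cases τ'; cases h; rfl

instance (D : Finset (Sym2 V)) : Finite (Labelling G m N D) :=
  Finite.of_injective Labelling.g fun _ _ => Labelling.ext

@[simp]
theorem compMap_compMk {D' D : Finset (Sym2 V)} (h : D' ⊆ D) (v : V) :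
    compMap G h (compMk G D v) = compMk G D' v := rfl

@[simp]
theorem compMap_compMap {D'' D' D : Finset (Sym2 V)} (h₁ : D'' ⊆ D') (h₂ : D' ⊆ D)
    (c : Comp G D) : compMap G h₁ (compMap G h₂ c) = compMap G (h₁.trans h₂) c :=
  c.ind fun _ => rfl

theorem compMk_eq_of_adj {D : Finset (Sym2 V)} {a b : V} (hab : G.Adj a b) (hD : s(a, b) ∉ D) :
    compMk G D a = compMk G D b :=
  SimpleGraph.ConnectedComponent.sound
    (SimpleGraph.Adj.reachable (by rw [SimpleGraph.deleteEdges_adj]; exact ⟨hab, by simpa⟩))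

theorem compMk_ne_of_mem (hacyc : G.IsAcyclic) {D : Finset (Sym2 V)} {a b : V}
    (hab : G.Adj a b) (hD : s(a, b) ∈ D) : compMk G D a ≠ compMk G D b := fun h =>
  (SimpleGraph.isBridge_iff.mp (SimpleGraph.isAcyclic_iff_forall_adj_isBridge.mp hacyc hab))
    ((SimpleGraph.ConnectedComponent.eq.mp h).mono
      (SimpleGraph.deleteEdges_anti (by simpa using hD)))

theorem sum_compMap_fiber {α : Type} [Fintype α] {D' D : Finset (Sym2 V)} (h : D' ⊆ D)
    (f : α → Comp G D) (w : α → ℕ) (c : Comp G D') :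
    ∑ a with compMap G h (f a) = c, w a
      = ∑ b with compMap G h b = c, ∑ a with f a = b, w a := by
  rw [← Finset.sum_fiberwise_of_maps_to (g := f) (t := {b | compMap G h b = c})
    (by simp)]
  refine Finset.sum_congr rfl fun b hb => Finset.sum_congr ?_ fun _ _ => rfl
  ext a
  simp only [Finset.mem_filter, Finset.mem_univ, true_and] at hb ⊢
  exact ⟨And.right, fun ha => ⟨ha ▸ hb, ha⟩⟩

def Labelling.coarsen {D' D : Finset (Sym2 V)} (h : D' ⊆ D) (τ : Labelling G m N D) :
    Labelling G m N D' where
  g ℓ := compMap G h (τ.g ℓ)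
  balanced c := by
    calc (Finset.univ.filter fun ℓ => compMap G h (τ.g ℓ) = c).card
        = ∑ b with compMap G h b = c, (Finset.univ.filter fun ℓ => τ.g ℓ = b).card := by
          simpa using sum_compMap_fiber h τ.g (fun _ => 1) c
      _ = ∑ b with compMap G h b = c, cap G m D b :=
          Finset.sum_congr rfl fun b _ => τ.balanced b
      _ = cap G m D' c := (sum_compMap_fiber h (compMk G D) m c).symm

theorem Redistrib.coarsen_eq {D' D : Finset (Sym2 V)} {τ τ' : Labelling G m N D}
    {i j : Comp G D} (hred : Redistrib τ τ' i j) (h : D' ⊆ D)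
    (hij : compMap G h i = compMap G h j) : τ'.coarsen h = τ.coarsen h := by
  have hmerge : ∀ c, c = i ∨ c = j → compMap G h c = compMap G h i := by
    rintro c (rfl | rfl) <;> simp [hij]
  refine Labelling.ext (funext fun ℓ => ?_)
  by_cases hℓ : τ.g ℓ = i ∨ τ.g ℓ = j
  · exact (hmerge _ (hred.2 ℓ hℓ)).trans (hmerge _ hℓ).symm
  · rw [not_or] at hℓ
    exact congrArg (compMap G h) (hred.1 ℓ hℓ.1 hℓ.2)

theorem fullD_coe_subset : ((fullD G : Finset (Sym2 V)) : Set (Sym2 V)) ⊆ G.edgeSet := by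
  simp [fullD]

theorem subface_fullFace_iff {S : Face G m N} {σ : Labelling G m N (fullD G)} :
    Subface S (fullFace G m N σ) ↔ S.lab = σ.coarsen S.subset_fullD :=
  ⟨fun ⟨_, hg⟩ => Labelling.ext (funext hg),
    fun h => ⟨S.subset_fullD, fun ℓ => congrArg (Labelling.g · ℓ) h⟩⟩

theorem Subface.of_subset_of_subface {S F X : Face G m N} (hSF : S.D ⊆ F.D)
    (hS : Subface S X) (hF : Subface F X) : Subface S F := by
  obtain ⟨_, hSX⟩ := hS
  obtain ⟨_, hFX⟩ := hF
  exact ⟨hSF, fun ℓ => by rw [hSX, hFX, compMap_compMap]⟩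

namespace IsInversionFunction

variable {I : InvData G m N}

theorem exists_step (hI : IsInversionFunction G m N I) {D : Finset (Sym2 V)}
    (hD : (D : Set (Sym2 V)) ⊆ G.edgeSet) {σ : Labelling G m N D} {i j : Comp G D}
    (hp : (i, j) ∈ I D σ) : ∃ σ', Redistrib σ σ' i j ∧ Step I D D σ' σ := by
  obtain ⟨hne, a, b, hab, ha, hb⟩ := hI.adj D hD σ _ hp
  obtain ⟨σ', ⟨hred, hni⟩, -⟩ := hI.unique_redistrib D hD σ i j ⟨hne, a, b, hab, ha, hb⟩
  exact ⟨σ', hred, i, j, hp, ⟨a, b, hab, ha, hb⟩, hred, hni⟩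

theorem exists_inv_of_not_invFree {S : Face G m N} {σ : Labelling G m N (fullD G)}
    (h : ¬ InvFreeOnComponents I S σ) :
    ∃ i j, (i, j) ∈ I (fullD G) σ ∧ compMap G S.subset_fullD i = compMap G S.subset_fullD j := by
  simpa [InvFreeOnComponents] using h

/-- A sorting step along an inversion inside a component of `S` keeps the facet above `S`,
and such steps can only stop at the unique facet inversion-free on the components of `S`. -/
theorem rank_le_of_invFree (hI : IsInversionFunction G m N I)
    {rank : Labelling G m N (fullD G) → ℕ}
    (hrank : ∀ τ τ', Step I (fullD G) (fullD G) τ' τ → rank τ' < rank τ)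
    {S : Face G m N} {τ σ : Labelling G m N (fullD G)} (hτ : Subface S (fullFace G m N τ))
    (hfree : InvFreeOnComponents I S τ) (hσ : Subface S (fullFace G m N σ)) :
    rank τ ≤ rank σ := by
  induction hn : rank σ using Nat.strong_induction_on generalizing σ with
  | _ n ih =>
    subst hn
    by_cases hσfree : InvFreeOnComponents I S σ
    · rw [(hI.unique_facet S).unique ⟨hτ, hfree⟩ ⟨hσ, hσfree⟩]
    obtain ⟨i, j, hp, hij⟩ := exists_inv_of_not_invFree hσfree
    obtain ⟨σ', hred, hstep⟩ := hI.exists_step fullD_coe_subset hp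
    have hσ' : Subface S (fullFace G m N σ') := by
      rw [subface_fullFace_iff, hred.coarsen_eq _ hij, ← subface_fullFace_iff]
      exact hσ
    exact (ih _ (hrank _ _ hstep) hσ' rfl).trans (hrank _ _ hstep).le

theorem isShellingVia (hI : IsInversionFunction G m N I) (hacyc : G.IsAcyclic)
    {rank : Labelling G m N (fullD G) → ℕ} (hinj : Function.Injective rank)
    (hrank : ∀ τ τ', Step I (fullD G) (fullD G) τ' τ → rank τ' < rank τ) :
    IsShellingVia G m N ((fullD G).card - 1) (fullFace G m N) rank := by
  refine ⟨hinj, fun τ S hτ ⟨σ, hlt, hσ⟩ => ?_⟩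
  obtain ⟨i, j, hp, hij⟩ := exists_inv_of_not_invFree fun hfree =>
    (hI.rank_le_of_invFree hrank hτ hfree hσ).not_gt hlt
  obtain ⟨-, a, b, hab, rfl, rfl⟩ := hI.adj _ fullD_coe_subset τ _ hp
  have hadj : G.Adj a b := by simpa [fullD] using hab
  have hS : S.D ⊆ (fullD G).erase s(a, b) :=
    Finset.subset_erase.mpr ⟨S.subset_fullD, fun h => compMk_ne_of_mem hacyc hadj h hij⟩
  have hsub : (fullD G).erase s(a, b) ⊆ fullD G := Finset.erase_subset _ _
  let F : Face G m N := ⟨_, fun _ he => fullD_coe_subset (hsub he), τ.coarsen hsub⟩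
  have hF : Subface F (fullFace G m N τ) := subface_fullFace_iff.mpr rfl
  obtain ⟨σ', hred, hstep⟩ := hI.exists_step fullD_coe_subset hp
  refine ⟨F, Finset.card_erase_of_mem hab, Subface.of_subset_of_subface hS hτ hF, hF, σ', hrank _ _ hstep, ?_⟩
  exact subface_fullFace_iff.mpr
    (hred.coarsen_eq hsub (compMk_eq_of_adj hadj (Finset.notMem_erase _ _))).symm

end IsInversionFunction

theorem IsShellingVia.comp_equiv {d : ℕ} {ι ι' : Type} {toFace : ι → Face G m N}
    {rank : ι → ℕ} (h : IsShellingVia G m N d toFace rank) (e : ι' ≃ ι) :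
    IsShellingVia G m N d (toFace ∘ e) (rank ∘ e) := by
  refine ⟨h.1.comp e.injective, fun k S hS ⟨j, hj, hSj⟩ => ?_⟩
  obtain ⟨S', hcard, hSS', hS'k, j', hj', hS'j'⟩ := h.2 (e k) S hS ⟨e j, hj, hSj⟩
  exact ⟨S', hcard, hSS', hS'k, e.symm j', by simpa using hj', by simpa using hS'j'⟩

def facetEquiv : Labelling G m N (fullD G) ≃ {F : Face G m N // F.D = fullD G} where
  toFun w := ⟨fullFace G m N w, rfl⟩
  invFun F := F.2 ▸ F.1.lab
  left_inv _ := rfl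
  right_inv := by
    rintro ⟨⟨D, hD, lab⟩, hfull⟩
    dsimp only at hfull
    subst hfull
    rfl

theorem IsShellingVia.shellableOn_facets {d : ℕ} {rank : Labelling G m N (fullD G) → ℕ}
    (h : IsShellingVia G m N d (fullFace G m N) rank) :
    ShellableOn G m N (fun F => F.D = fullD G) d := by
  refine ⟨rank ∘ facetEquiv.symm, ?_⟩
  have hface : (fun F => F.1) = fullFace G m N ∘ facetEquiv.symm :=
    funext fun F => congrArg Subtype.val (facetEquiv.apply_symm_apply F).symm
  exact hface ▸ h.comp_equiv facetEquiv.symm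

end Shelling

theorem shellable_of_inversion_function_general
    (G : SimpleGraph V) (hacyc : G.IsAcyclic)
    (m : V → ℕ) (N : ℕ)
    (I : InvData G m N) (hI : IsInversionFunction G m N I) :
    ShellableOn G m N (fun F => F.D = fullD G) ((fullD G).card - 1) ∧
      ∀ rank : Labelling G m N (fullD G) → ℕ,
        Function.Injective rank →
        (∀ τ τ' : Labelling G m N (fullD G),
          Relation.TransGen (Step I (fullD G) (fullD G)) τ' τ → rank τ' < rank τ) →
        IsShellingVia G m N ((fullD G).card - 1) (fullFace G m N) rank := by
  obtain ⟨rank, hinj, hrank⟩ := exists_injective_nat_of_transGen_irrefl _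
    (hI.weak_order (fullD G) fullD_coe_subset (fullD G) subset_rfl)
  refine ⟨(hI.isShellingVia hacyc hinj fun τ τ' h => hrank τ' τ h).shellableOn_facets, ?_⟩
  exact fun rank hinj hrank => hI.isShellingVia hacyc hinj fun τ τ' h => hrank τ τ' (.single h)

/-- If `(T,m)` admits an inversion function `I`, then `Δ_{(T,m)}` is
shellable; more precisely, any linear extension (injective rank function) of the weak
order associated to `I` orders the facets (the labellings of `(T,m)`) into a shelling. -/
theorem shellable_of_inversion_function
    (G : SimpleGraph V) (hconn : G.Connected) (hacyc : G.IsAcyclic)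
    (m : V → ℕ) (N : ℕ) (hN : N = ∑ v : V, m v)
    (I : InvData G m N) (hI : IsInversionFunction G m N I) :
    ShellableOn G m N (fun F => F.D = fullD G) ((fullD G).card - 1) ∧
      ∀ rank : Labelling G m N (fullD G) → ℕ,
        Function.Injective rank →
        (∀ τ τ' : Labelling G m N (fullD G),
          Relation.TransGen (Step I (fullD G) (fullD G)) τ' τ → rank τ' < rank τ) →
        IsShellingVia G m N ((fullD G).card - 1) (fullFace G m N) rank :=
  shellable_of_inversion_function_general G hacyc m N I hI

end
end

section
/- Let T be a finite tree with at least two vertices, rooted at a leaf r (so every vertex other than r has a unique parent, and the children of a vertex v are its neighbors other than its parent). Suppose that for each vertex v having at least one child a single child c(v) is chosen, and let E be the set of edges {v, c(v)} over all such v. Then, taking all vertex capacities equal to 1: (a) the contracted tree of (T,E) has distributable capacity; and (b) for every set E' of edges of T disjoint from E and every connected component U of the forest T - E', the contracted tree of (U, E restricted to U) has distributable capacity. -/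
set_option linter.unusedSectionVars false

open scoped Classical

noncomputable section

variable {V : Type} [Fintype V] [DecidableEq V]

/-! The edges of `E` meeting a component `c` of `T - D`, for `D ⊇ E`, are the `{v, f v}` with
`v ∈ c`, at most `|c|` of them, and those with `f v ∈ c`, of which there is at most one. Indeed
then the parent edge of `f v` lies in `D`, and at most one vertex `u` of `c` has its parent edge
in `D`: the path from the root to any other `x ∈ c`, followed by a path from `x` to `u` inside
`c`, must use the parent edge of `u`, which forces `u` to lie strictly closer to the root than
`x`; two such vertices would each be closer than the other. -/

namespace SimpleGraph

variable {W : Type*} {G : SimpleGraph W} {r p u x : W}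

def IsChild (G : SimpleGraph W) (r p u : W) : Prop :=
  G.Adj p u ∧ G.dist r u = G.dist r p + 1

lemma IsChild.reachable (h : G.IsChild r p u) : G.Reachable r u :=
  Reachable.of_dist_ne_zero (by rw [h.2]; exact Nat.succ_ne_zero _)

lemma Walk.dist_lt_of_mem_support_of_length_eq_dist (w : G.Walk r u)
    (hw : w.length = G.dist r u) (hx : x ∈ w.support) (hne : x ≠ u) :
    G.dist r x < G.dist r u := by
  have hsplit := congrArg Walk.length (w.take_spec hx)
  rw [Walk.length_append] at hsplit
  have hdrop : (w.dropUntil x hx).length ≠ 0 := fun h0 => hne (Walk.eq_of_length_eq_zero h0)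
  have := dist_le (w.takeUntil x hx)
  omega

lemma IsAcyclic.isChild_edge_mem_edges (hG : G.IsAcyclic) (h : G.IsChild r p u)
    (w : G.Walk r u) : s(p, u) ∈ w.edges := by
  obtain ⟨q, hq, hql⟩ := (h.reachable.trans h.1.symm.reachable).exists_path_of_dist
  have hu : u ∉ q.support := fun hu => by
    have := (dist_le (q.takeUntil u hu)).trans (q.length_takeUntil_le_length hu)
    have := h.2
    omega
  have hbypass : w.bypass = q.concat h.1 := congrArg Subtype.val <|
    (hG.subsingleton_path r u).elim ⟨_, w.bypass_isPath⟩ ⟨_, hq.concat hu h.1⟩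
  apply w.edges_bypass_subset_edges
  simp [hbypass, Walk.edges_concat]

lemma IsAcyclic.isChild_unique (hG : G.IsAcyclic) {p₁ p₂ : W} (h₁ : G.IsChild r p₁ u)
    (h₂ : G.IsChild r p₂ u) : p₁ = p₂ := by
  obtain ⟨q, hq, -⟩ := h₁.reachable.exists_path_of_dist
  have eq_penultimate (p : W) (h : G.IsChild r p u) : p = q.penultimate :=
    hG.eq_penultimate_of_adj_end hq h.1.symm
      (q.fst_mem_support_of_mem_edges (hG.isChild_edge_mem_edges h q))
  exact (eq_penultimate _ h₁).trans (eq_penultimate _ h₂).symm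

lemma IsAcyclic.dist_lt_of_reachable_deleteEdges (hG : G.IsAcyclic) {D : Set (Sym2 W)}
    (h : G.IsChild r p u) (hD : s(p, u) ∈ D) (hreach : (G.deleteEdges D).Reachable x u)
    (hne : u ≠ x) : G.dist r u < G.dist r x := by
  obtain ⟨q⟩ := hreach
  let q' : G.Walk x u := q.mapLe (G.deleteEdges_le D)
  obtain ⟨w, hw⟩ := (h.reachable.trans q'.reachable.symm).exists_walk_length_eq_dist
  have hq' : s(p, u) ∉ q'.edges := fun hmem => by
    have := q.edges_subset_edgeSet (by rwa [Walk.edges_mapLe_eq_edges] at hmem)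
    rw [edgeSet_deleteEdges] at this
    exact this.2 hD
  have hmem := hG.isChild_edge_mem_edges h (w.append q')
  rw [Walk.edges_append, List.mem_append] at hmem
  exact w.dist_lt_of_mem_support_of_length_eq_dist hw
    (w.snd_mem_support_of_mem_edges (hmem.resolve_right hq')) hne

lemma IsAcyclic.eq_of_isChild_of_reachable_deleteEdges (hG : G.IsAcyclic) {D : Set (Sym2 W)}
    {p₁ p₂ u₁ u₂ : W} (h₁ : G.IsChild r p₁ u₁) (h₂ : G.IsChild r p₂ u₂)
    (hD₁ : s(p₁, u₁) ∈ D) (hD₂ : s(p₂, u₂) ∈ D) (hreach : (G.deleteEdges D).Reachable u₁ u₂) :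
    u₁ = u₂ := by
  by_contra hne
  have := hG.dist_lt_of_reachable_deleteEdges h₂ hD₂ hreach (Ne.symm hne)
  have := hG.dist_lt_of_reachable_deleteEdges h₁ hD₁ hreach.symm hne
  omega

end SimpleGraph

open SimpleGraph Finset

lemma cap_one_eq_card (G : SimpleGraph V) (D : Finset (Sym2 V)) (c : Comp G D) :
    cap G (fun _ => 1) D c = #{v | compMk G D v = c} := by
  simp [cap]

theorem card_filter_incident_image_isChild_le {G : SimpleGraph V} (hG : G.IsAcyclic) {r : V}
    {f : V → V} {A : Finset V} (hf : ∀ v ∈ A, G.IsChild r v (f v))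
    {D : Finset (Sym2 V)} (hD : A.image (fun v => s(v, f v)) ⊆ D) (c : Comp G D) :
    #{e ∈ A.image (fun v => s(v, f v)) | ∃ x ∈ e, compMk G D x = c} ≤
      cap G (fun _ => 1) D c + 1 := by
  set inside := {v ∈ A | compMk G D v = c}
  set enters := {v ∈ A | compMk G D (f v) = c}
  have h_sub : {e ∈ A.image (fun v => s(v, f v)) | ∃ x ∈ e, compMk G D x = c} ⊆
      (inside ∪ enters).image (fun v => s(v, f v)) := by
    intro e he
    obtain ⟨he, x, hx, hxc⟩ := mem_filter.mp he
    obtain ⟨v, hv, rfl⟩ := mem_image.mp he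
    refine mem_image_of_mem _ (mem_union.mpr ?_)
    rcases Sym2.mem_iff.mp hx with rfl | rfl
    · exact .inl (mem_filter.mpr ⟨hv, hxc⟩)
    · exact .inr (mem_filter.mpr ⟨hv, hxc⟩)
  have h_inside : #inside ≤ cap G (fun _ => 1) D c := by
    rw [cap_one_eq_card]
    exact card_le_card (filter_subset_filter _ (subset_univ A))
  have h_enters : #enters ≤ 1 := by
    refine card_le_one.mpr fun v hv v' hv' => ?_
    obtain ⟨hvA, hvc⟩ := mem_filter.mp hv
    obtain ⟨hv'A, hv'c⟩ := mem_filter.mp hv'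
    have hreach : (G.deleteEdges (D : Set (Sym2 V))).Reachable (f v) (f v') :=
      ConnectedComponent.eq.mp (hvc.trans hv'c.symm)
    have hfv : f v = f v' := hG.eq_of_isChild_of_reachable_deleteEdges (hf v hvA) (hf v' hv'A)
      (hD (mem_image_of_mem _ hvA)) (hD (mem_image_of_mem _ hv'A)) hreach
    exact hG.isChild_unique (hf v hvA) (hfv ▸ hf v' hv'A)
  calc _ ≤ #((inside ∪ enters).image (fun v => s(v, f v))) := card_le_card h_sub
    _ ≤ #(inside ∪ enters) := card_image_le
    _ ≤ #inside + #enters := card_union_le _ _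
    _ ≤ _ := by omega

theorem first_children_edge_set_distributable_general
    (G : SimpleGraph V) (hacyc : G.IsAcyclic)
    (r : V)
    (f : V → V)
    (hf : ∀ v : V, (∃ w : V, G.Adj v w ∧ G.dist r w = G.dist r v + 1) →
      G.Adj v (f v) ∧ G.dist r (f v) = G.dist r v + 1)
    (E : Finset (Sym2 V))
    (hE : E = (Finset.univ.filter
        (fun v : V => ∃ w : V, G.Adj v w ∧ G.dist r w = G.dist r v + 1)).image
        (fun v => s(v, f v))) :
    ContractedDistributable G (fun _ => 1) E ∧
      RestrictedDistributable G (fun _ => 1) E := by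
  have hchild : ∀ v ∈ univ.filter (fun v : V => ∃ w : V, G.Adj v w ∧
      G.dist r w = G.dist r v + 1), G.IsChild r v (f v) :=
    fun v hv => hf v (mem_filter.mp hv).2
  subst hE
  refine ⟨fun c => ?_, fun E' _ _ c => ?_⟩
  · exact Nat.sub_le_of_le_add (card_filter_incident_image_isChild_le hacyc hchild subset_rfl c)
  · refine Nat.sub_le_of_le_add ((card_le_card ?_).trans
      (card_filter_incident_image_isChild_le hacyc hchild subset_union_right c))
    exact monotone_filter_right _ fun _ _ he => he.1

/-- Let `T` be a tree with at least two vertices rooted at a leaf `r`,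
and for each vertex `v` having at least one child let a child `f v` be chosen; let `E`
be the set of the resulting edges `{v, f v}`. Then, with all capacities `1`: (a) the
contracted tree of `(T,E)` has distributable capacity, and (b) for every edge set `E'`
disjoint from `E` and every connected component `U` of `T - E'`, the contracted tree of
`(U, E|_U)` has distributable capacity. -/
theorem first_children_edge_set_distributable
    (G : SimpleGraph V) (hconn : G.Connected) (hacyc : G.IsAcyclic)
    (hcard : 2 ≤ Fintype.card V)
    (r : V) (hr : deg G r = 1)
    (f : V → V)
    (hf : ∀ v : V, (∃ w : V, G.Adj v w ∧ G.dist r w = G.dist r v + 1) →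
      G.Adj v (f v) ∧ G.dist r (f v) = G.dist r v + 1)
    (E : Finset (Sym2 V))
    (hE : E = (Finset.univ.filter
        (fun v : V => ∃ w : V, G.Adj v w ∧ G.dist r w = G.dist r v + 1)).image
        (fun v => s(v, f v))) :
    ContractedDistributable G (fun _ => 1) E ∧
      RestrictedDistributable G (fun _ => 1) E :=
  first_children_edge_set_distributable_general G hacyc r f hf E hE

end
end
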